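/- Let H be a subgroup of the finite group G and V a G-module. Then σ(H,V) ≤ σ(G,V) ≤ [G:H] · σ(H,V), where V is regarded as an H-module by restriction. -/

import Mathlib

open scoped ENNReal

open MvPolynomial

/-- The (right) action of a group element `g` on the coordinate ring `F[V]` of `V = ι → F`,
determined by `(f^g)(v) = f (g • v)` where `g` acts on `V` through the representation `ρ`. -/
noncomputable def polyAct {F : Type*} [Field F] {G : Type*} [Group G] {ι : Type*}
    [Fintype ι] [DecidableEq ι] (ρ : Representation F G (ι → F)) (g : G) :
    MvPolynomial ι F →ₐ[F] MvPolynomial ι F :=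
  MvPolynomial.aeval (fun i => ∑ j, (ρ g (Pi.single j 1) i) • MvPolynomial.X j)

/-- The ring of polynomial invariants `F[V]^G`. -/
noncomputable def invRing {F : Type*} [Field F] {G : Type*} [Group G] {ι : Type*}
    [Fintype ι] [DecidableEq ι] (ρ : Representation F G (ι → F)) :
    Subalgebra F (MvPolynomial ι F) :=
  ⨅ g : G, AlgHom.equalizer (polyAct ρ g) (AlgHom.id F (MvPolynomial ι F))

/-- The degree `d` homogeneous component of a graded subalgebra `S` of the polynomial ring,
as a subspace of the polynomial ring. -/
noncomputable def subComp {F : Type*} [Field F] {ι : Type*} (S : Subalgebra F (MvPolynomial ι F)) (d : ℕ) :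
    Submodule F (MvPolynomial ι F) :=
  Subalgebra.toSubmodule S ⊓ homogeneousSubmodule ι F d

/-- `S_+`, the span of the homogeneous elements of positive degree of `S`. -/
noncomputable def subPos {F : Type*} [Field F] {ι : Type*} (S : Subalgebra F (MvPolynomial ι F)) :
    Submodule F (MvPolynomial ι F) :=
  ⨆ d ∈ Set.Ioi (0 : ℕ), subComp S d

/-- `β_k(S)`, the top degree of `S_+ / S_+^{k+1}`, i.e. the supremum (in `ℕ∞`) of the degrees `d`
such that the degree `d` component of `S_+` is not contained in `S_+^{k+1}`. -/
noncomputable def betaAlg {F : Type*} [Field F] {ι : Type*}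
    (S : Subalgebra F (MvPolynomial ι F)) (k : ℕ) : ℕ∞ :=
  sSup ((fun d : ℕ => (d : ℕ∞)) '' {d | 0 < d ∧ ¬ subComp S d ≤ subPos S ^ (k + 1)})

/-- `β_k(F[V], S)`, the top degree of `F[V]/S_+^k F[V]`, i.e. the supremum (in `ℕ∞`) of the
degrees `d` such that the degree `d` component of the polynomial ring is not contained in
`S_+^k ⬝ F[V]`. -/
noncomputable def betaMod {F : Type*} [Field F] {ι : Type*}
    (S : Subalgebra F (MvPolynomial ι F)) (k : ℕ) : ℕ∞ :=
  sSup ((fun d : ℕ => (d : ℕ∞)) ''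
    {d | ¬ homogeneousSubmodule ι F d ≤ subPos S ^ k * (⊤ : Submodule F (MvPolynomial ι F))})

/-- `β_k(G)`, the supremum over all finite dimensional `G`-modules `V` of `β_k(F[V]^G)`. -/
noncomputable def betaGrp (F : Type*) [Field F] (G : Type*) [Group G] (k : ℕ) : ℕ∞ :=
  ⨆ (n : ℕ) (ρ : Representation F G (Fin n → F)), betaAlg (invRing ρ) k

/-- `S` is a finitely generated module over its subalgebra `T`. -/
noncomputable def fgOver {F : Type*} [Field F] {ι : Type*} (S T : Subalgebra F (MvPolynomial ι F)) : Prop :=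
  ∃ B : Finset (MvPolynomial ι F), (B : Set (MvPolynomial ι F)) ⊆ S ∧
    Subalgebra.toSubmodule S ≤ Subalgebra.toSubmodule T * Submodule.span F (B : Set (MvPolynomial ι F))

/-- `σ(S)`: the minimal `d` such that `S` is a finitely generated module over the subalgebra
`F[S_{≤ d}]` generated by the homogeneous elements of `S` of degree at most `d`. -/
noncomputable def sigmaAlg {F : Type*} [Field F] {ι : Type*}
    (S : Subalgebra F (MvPolynomial ι F)) : ℕ :=
  sInf {d : ℕ | fgOver S (Algebra.adjoin F (⋃ i ∈ Set.Iic d, (subComp S i : Set (MvPolynomial ι F))))}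

/-- `σ(G)`, the supremum over all finite dimensional `G`-modules `V` of `σ(F[V]^G)`. -/
noncomputable def sigmaGrp (F : Type*) [Field F] (G : Type*) [Group G] : ℕ∞ :=
  ⨆ (n : ℕ) (ρ : Representation F G (Fin n → F)), (sigmaAlg (invRing ρ) : ℕ∞)

/-- An irreducible (simple, nonzero) representation. -/
def IsIrredRep {F : Type*} [Field F] {G : Type*} [Group G] {V : Type*}
    [AddCommGroup V] [Module F V] (π : Representation F G V) : Prop :=
  Nontrivial V ∧ ∀ W : Submodule F V, (∀ g : G, ∀ x ∈ W, π g x ∈ W) → W = ⊥ ∨ W = ⊤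

/-!
Let `S ⊆ F[V]` be a graded subalgebra with `F[V]` finite over some `F[S_{≤d₀}]`. Then `S` is a
finite `F[S_{≤d}]`-module exactly when `F[V]` is (`F[S_{≤d}]` is noetherian), so `σ(S)` is the least `d` for which `F[V]` is finite over
`F[S_{≤d}]`. The lower bound then follows from `F[V]^G ⊆ F[V]^H`. For the upper bound, an
`H`-invariant `f` homogeneous of degree `e` is a root of its relative norm `∏_{gH} (T - g • f)`,
whose coefficients are `G`-invariants of degree at most `e [G:H]`. So the generators of `F[V]^H`
of degree at most `σ(H,V)` are integral over `F[(F[V]^G)_{≤ [G:H] σ(H,V)}]`, hence so is `F[V]`.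
The case `H = 1` provides `d₀ = |G|`.
-/

namespace Subalgebra

open Submodule
open scoped Pointwise

variable {R A : Type*} [CommRing R] [CommRing A] [Algebra R A]

theorem toSubmodule_mul_span (T : Subalgebra R A) (s : Set A) :
    toSubmodule T * span R s = (span T s).restrictScalars R := by
  have hsmul : (Set.univ : Set T) • s = (T : Set A) * s := by
    ext x
    simp [Set.mem_smul, Set.mem_mul, Subalgebra.smul_def]
  rw [← span_smul_of_span_eq_top (R := R) (span_univ ..), hsmul, ← span_mul_span]
  exact congrArg (· * span R s) (span_eq (toSubmodule T)).symm

theorem module_finite_iff_exists_finset (T : Subalgebra R A) :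
    Module.Finite T A ↔ ∃ B : Finset A, toSubmodule T * span R B = ⊤ := by
  simp_rw [toSubmodule_mul_span, restrictScalars_eq_top_iff]
  exact ⟨fun ⟨⟨B, hB⟩⟩ => ⟨B, hB⟩, fun ⟨B, hB⟩ => ⟨⟨B, hB⟩⟩⟩

theorem module_finite_of_le_mul_span {S T : Subalgebra R A} [Module.Finite S A] {s : Set A}
    (hs : s.Finite) (hST : toSubmodule S ≤ toSubmodule T * span R s) : Module.Finite T A := by
  obtain ⟨B, hB⟩ := (module_finite_iff_exists_finset S).mp ‹_›
  refine (module_finite_iff_exists_finset T).mpr ⟨(hs.mul B.finite_toSet).toFinset, ?_⟩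
  rw [Set.Finite.coe_toFinset, ← span_mul_span, ← mul_assoc, eq_top_iff, ← hB]
  exact mul_le_mul' hST le_rfl

theorem module_finite_of_le {S T : Subalgebra R A} [Module.Finite S A] (hST : S ≤ T) :
    Module.Finite T A := by
  refine module_finite_of_le_mul_span (S := S) (s := {1}) (Set.finite_singleton 1) ?_
  rw [← one_eq_span, mul_one]
  exact hST

theorem exists_finset_subset_le_mul_span [IsNoetherianRing R] {S T : Subalgebra R A}
    [Module.Finite T A] (hT : T.FG) (hTS : T ≤ S) :
    ∃ B : Finset A, ↑B ⊆ (S : Set A) ∧ toSubmodule S ≤ toSubmodule T * span R B := by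
  have : IsNoetherianRing T := isNoetherianRing_of_fg hT
  have hspan : (span T (S : Set A)).restrictScalars R = toSubmodule S := by
    have hS := span_eq (toSubmodule S)
    rw [coe_toSubmodule] at hS
    rw [← toSubmodule_mul_span, hS, mul_toSubmodule, sup_eq_right.mpr hTS]
  obtain ⟨B, hBS, hB⟩ := (fg_span_iff_fg_span_finset_subset (R := T) (S : Set A)).mp
    (IsNoetherian.noetherian _)
  exact ⟨B, hBS, by rw [← hspan, hB, toSubmodule_mul_span]⟩

theorem module_finite_of_le_integralClosure {S T : Subalgebra R A} [Module.Finite S A]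
    (hS : S.FG) (hST : S ≤ (integralClosure T A).restrictScalars R) : Module.Finite T A := by
  obtain ⟨s, rfl⟩ := hS
  obtain ⟨B, hB⟩ :=
    fg_adjoin_of_finite s.finite_toSet fun x hx => hST (Algebra.subset_adjoin hx)
  refine module_finite_of_le_mul_span (S := Algebra.adjoin R s) B.finite_toSet ?_
  rw [toSubmodule_mul_span, hB]
  exact (Algebra.adjoin_le Algebra.subset_adjoin : Algebra.adjoin R (s : Set A) ≤
    (Algebra.adjoin T (s : Set A)).restrictScalars R)

theorem module_finite_of_adjoin_eq_top {s : Set A} (hs : s.Finite)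
    (htop : Algebra.adjoin R s = ⊤) {T : Subalgebra R A} (hT : ∀ x ∈ s, IsIntegral T x) :
    Module.Finite T A := by
  refine ⟨?_⟩
  have hadj : Algebra.adjoin T s = ⊤ := by
    refine top_le_iff.mp fun x _ => (mem_restrictScalars R).mp ?_
    exact (Algebra.adjoin_le Algebra.subset_adjoin : Algebra.adjoin R s ≤
      (Algebra.adjoin T s).restrictScalars R) (htop ▸ trivial)
  simpa [hadj] using fg_adjoin_of_finite hs hT

end Subalgebra

section LowDegree

open Subalgebra

variable {F : Type*} [Field F] {ι : Type*}

noncomputable def lowDegAdjoin (S : Subalgebra F (MvPolynomial ι F)) (d : ℕ) :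
    Subalgebra F (MvPolynomial ι F) :=
  Algebra.adjoin F (⋃ i ∈ Set.Iic d, (subComp S i : Set (MvPolynomial ι F)))

theorem lowDegAdjoin_le (S : Subalgebra F (MvPolynomial ι F)) (d : ℕ) : lowDegAdjoin S d ≤ S :=
  Algebra.adjoin_le <| Set.iUnion₂_subset fun _ _ _ hx => (Submodule.mem_inf.mp hx).1

theorem lowDegAdjoin_mono {S S' : Subalgebra F (MvPolynomial ι F)} (hS : S ≤ S') {d d' : ℕ}
    (hd : d ≤ d') : lowDegAdjoin S d ≤ lowDegAdjoin S' d' :=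
  Algebra.adjoin_mono <| Set.biUnion_mono (fun _ hi => le_trans hi hd) fun _ _ =>
    inf_le_inf_right _ (toSubmodule.monotone hS)

theorem lowDegAdjoin_fg [Finite ι] (S : Subalgebra F (MvPolynomial ι F)) (d : ℕ) :
    (lowDegAdjoin S d).FG := by
  set U := ⋃ i ∈ Set.Iic d, (subComp S i : Set (MvPolynomial ι F))
  have hU : Submodule.span F U ≤ restrictTotalDegree ι F d := by
    refine Submodule.span_le.mpr <| Set.iUnion₂_subset fun i hi x hx => ?_
    exact (mem_restrictTotalDegree ι d x).mpr
      ((Submodule.mem_inf.mp hx).2.totalDegree_le.trans hi)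
  have : FiniteDimensional F (Submodule.span F U) := Submodule.finiteDimensional_of_le hU
  obtain ⟨B, hB⟩ := (Submodule.fg_iff_finiteDimensional _).mpr this
  exact ⟨B, by rw [← Algebra.adjoin_span, hB, Algebra.adjoin_span]; rfl⟩

theorem fgOver_iff_module_finite {S T : Subalgebra F (MvPolynomial ι F)}
    [Module.Finite S (MvPolynomial ι F)] (hT : T.FG) (hTS : T ≤ S) :
    fgOver S T ↔ Module.Finite T (MvPolynomial ι F) := by
  constructor
  · rintro ⟨B, -, hB⟩
    exact module_finite_of_le_mul_span B.finite_toSet hB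
  · intro _
    exact exists_finset_subset_le_mul_span hT hTS

theorem sigmaAlg_le_iff [Finite ι] {S : Subalgebra F (MvPolynomial ι F)} {d₀ : ℕ}
    (h₀ : Module.Finite (lowDegAdjoin S d₀) (MvPolynomial ι F)) {d : ℕ} :
    sigmaAlg S ≤ d ↔ Module.Finite (lowDegAdjoin S d) (MvPolynomial ι F) := by
  have : Module.Finite S (MvPolynomial ι F) := module_finite_of_le (lowDegAdjoin_le S d₀)
  have hfg (d) := fgOver_iff_module_finite (lowDegAdjoin_fg S d) (lowDegAdjoin_le S d)
  constructor
  · intro h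
    have : Module.Finite (lowDegAdjoin S (sigmaAlg S)) (MvPolynomial ι F) := (hfg _).mp <|
      Nat.sInf_mem (s := {d | fgOver S (lowDegAdjoin S d)}) ⟨d₀, (hfg d₀).mpr h₀⟩
    exact module_finite_of_le (lowDegAdjoin_mono le_rfl h)
  · intro h
    exact Nat.sInf_le ((hfg d).mpr h)

end LowDegree

section PolyAct

variable {F : Type*} [Field F] {G : Type*} [Group G] {ι : Type*} [Fintype ι] [DecidableEq ι]
  (ρ : Representation F G (ι → F))

theorem polyAct_X (g : G) (i : ι) :
    polyAct ρ g (X i) = ∑ j, LinearMap.toMatrix' (ρ g) i j • X j := by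
  simp only [polyAct, aeval_X, LinearMap.toMatrix'_apply]

theorem polyAct_one : polyAct ρ 1 = AlgHom.id F (MvPolynomial ι F) :=
  algHom_ext fun i => by simp [polyAct_X, Pi.single_apply, ite_smul]

theorem polyAct_mul (g h : G) : polyAct ρ (g * h) = (polyAct ρ h).comp (polyAct ρ g) := by
  refine algHom_ext fun i => ?_
  simp only [AlgHom.comp_apply, polyAct_X, map_sum, map_smul, map_mul, LinearMap.toMatrix'_mul,
    Matrix.mul_apply, Finset.smul_sum, smul_smul, Finset.sum_smul]
  rw [Finset.sum_comm]

variable {ρ} in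
theorem mem_invRing {p : MvPolynomial ι F} : p ∈ invRing ρ ↔ ∀ g, polyAct ρ g p = p := by
  simp [invRing, Algebra.mem_iInf, AlgHom.mem_equalizer]

theorem invRing_le_invRing_comp_subtype (H : Subgroup G) :
    invRing ρ ≤ invRing (ρ.comp H.subtype) :=
  fun _ hp => mem_invRing.mpr fun h => mem_invRing.mp hp h

theorem isHomogeneous_polyAct {p : MvPolynomial ι F} {n : ℕ} (hp : p.IsHomogeneous n) (g : G) :
    (polyAct ρ g p).IsHomogeneous n := by
  have hX (i : ι) : (polyAct ρ g (X i)).IsHomogeneous 1 := by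
    rw [polyAct_X]
    exact IsHomogeneous.sum _ _ _ fun j _ =>
      (homogeneousSubmodule ι F 1).smul_mem _ (isHomogeneous_X F j)
  have := hp.aeval _ hX
  rwa [one_mul, ← Function.comp_def (polyAct ρ g), ← aeval_unique] at this

noncomputable abbrev polyMulSemiringAction : MulSemiringAction G (MvPolynomial ι F) where
  smul g := polyAct ρ g⁻¹
  one_smul p := by simp [HSMul.hSMul, polyAct_one]
  mul_smul g h p := by simp [HSMul.hSMul, polyAct_mul]
  smul_zero g := map_zero _
  smul_add g := map_add _
  smul_one g := map_one _
  smul_mul g := map_mul _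

end PolyAct

section RelativeNorm

open Finset

theorem isHomogeneous_coeff_prod_X_sub_C {σ R α : Type*} [CommRing R] {s : Finset α}
    {φ : α → MvPolynomial σ R} {e : ℕ} (hφ : ∀ a ∈ s, (φ a).IsHomogeneous e) (k : ℕ) :
    ((∏ a ∈ s, (Polynomial.X - Polynomial.C (φ a))).coeff k).IsHomogeneous (e * (#s - k)) := by
  by_cases hk : k ≤ #s
  · simp_rw [sub_eq_add_neg, ← Polynomial.C_neg, Finset.prod_X_add_C_coeff s _ hk]
    refine IsHomogeneous.sum _ _ _ fun t ht => ?_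
    have := IsHomogeneous.prod t _ _ fun a ha => (hφ a ((mem_powersetCard.mp ht).1 ha)).neg
    rwa [sum_const, (mem_powersetCard.mp ht).2, smul_eq_mul, mul_comm] at this
  · have hdeg : (∏ a ∈ s, (Polynomial.X - Polynomial.C (φ a))).natDegree < k :=
      calc _ ≤ ∑ a ∈ s, (Polynomial.X - Polynomial.C (φ a)).natDegree :=
            Polynomial.natDegree_prod_le _ _
        _ ≤ ∑ _a ∈ s, 1 := by gcongr with a; exact Polynomial.natDegree_X_sub_C_le (φ a)
        _ < k := by simpa using hk
    rw [Polynomial.coeff_eq_zero_of_natDegree_lt hdeg]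
    exact isHomogeneous_zero _ _ _

theorem isIntegral_of_monic_of_coeff_mem {R A : Type*} [CommRing R] [CommRing A] [Algebra R A]
    {T : Subalgebra R A} {q : Polynomial A} (hq : q.Monic) (hcoeff : ∀ n, q.coeff n ∈ T) {x : A}
    (hx : q.eval x = 0) : IsIntegral T x := by
  have hlifts : q ∈ Polynomial.lifts (algebraMap T A) :=
    (Polynomial.lifts_iff_coeff_lifts q).mpr fun n => ⟨⟨_, hcoeff n⟩, rfl⟩
  obtain ⟨p, hp, -, hmonic⟩ := Polynomial.lifts_and_natDegree_eq_and_monic hlifts hq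
  exact ⟨p, hmonic, by rw [Polynomial.eval₂_eq_eval_map, hp, hx]⟩

open MulAction in
theorem isHomogeneous_coeff_prodXSubSMul {σ R G : Type*} [CommRing R] [Group G] [Fintype G]
    [MulSemiringAction G (MvPolynomial σ R)] {f : MvPolynomial σ R} {e : ℕ}
    (hf : ∀ g : G, (g • f).IsHomogeneous e) (n : ℕ) :
    ((prodXSubSMul G (MvPolynomial σ R) f).coeff n).IsHomogeneous
      (e * ((stabilizer G f).index - n)) := by
  unfold prodXSubSMul
  convert isHomogeneous_coeff_prod_X_sub_C (fun c _ => ?_) n using 3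
  · simp only [Finset.card_univ, Fintype.card_eq_nat_card, Subgroup.index]
  · induction c using QuotientGroup.induction_on with
    | H g => rw [ofQuotientStabilizer_mk]; exact hf g

end RelativeNorm

section Invariants

variable {F : Type*} [Field F] {G : Type*} [Group G] {ι : Type*} [Fintype ι] [DecidableEq ι]
  (ρ : Representation F G (ι → F))

open MulAction in
theorem isIntegral_lowDegAdjoin_invRing [Finite G] (K : Subgroup G) {f : MvPolynomial ι F}
    {e : ℕ} (hf : f.IsHomogeneous e) (hK : ∀ k ∈ K, polyAct ρ k f = f) {D : ℕ}
    (hD : e * K.index ≤ D) : IsIntegral (lowDegAdjoin (invRing ρ) D) f := by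
  let := polyMulSemiringAction ρ
  have := Fintype.ofFinite G
  have hsmul (g : G) (p : MvPolynomial ι F) : g • p = polyAct ρ g⁻¹ p := rfl
  have hstab : K ≤ stabilizer G f := fun k hk => by
    rw [mem_stabilizer_iff, hsmul]
    exact hK _ (K.inv_mem hk)
  refine isIntegral_of_monic_of_coeff_mem (prodXSubSMul.monic G _ f) (fun n => ?_)
    (prodXSubSMul.eval G _ f)
  refine Algebra.subset_adjoin <|
    Set.mem_biUnion (x := e * ((stabilizer G f).index - n)) ?_ ⟨?_, ?_⟩
  · calc _ ≤ e * (stabilizer G f).index := Nat.mul_le_mul_left _ (Nat.sub_le _ _)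
      _ ≤ e * K.index := Nat.mul_le_mul_left _ (Subgroup.index_antitone hstab)
      _ ≤ D := hD
  · refine mem_invRing.mpr fun g => ?_
    have := prodXSubSMul.coeff G _ f g⁻¹ n
    rwa [hsmul, inv_inv] at this
  · exact isHomogeneous_coeff_prodXSubSMul (fun g => isHomogeneous_polyAct ρ hf g⁻¹) n

theorem module_finite_lowDegAdjoin_card [Finite G] :
    Module.Finite (lowDegAdjoin (invRing ρ) (Nat.card G)) (MvPolynomial ι F) := by
  refine Subalgebra.module_finite_of_adjoin_eq_top (Set.finite_range X) (adjoin_range_X) ?_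
  rintro _ ⟨i, rfl⟩
  exact isIntegral_lowDegAdjoin_invRing ρ ⊥ (isHomogeneous_X F i) (by simp [polyAct_one])
    (by simp)

theorem module_finite_lowDegAdjoin_index_mul [Finite G] (H : Subgroup G) {s : ℕ}
    [Module.Finite (lowDegAdjoin (invRing (ρ.comp H.subtype)) s) (MvPolynomial ι F)] :
    Module.Finite (lowDegAdjoin (invRing ρ) (H.index * s)) (MvPolynomial ι F) := by
  refine Subalgebra.module_finite_of_le_integralClosure
    (S := lowDegAdjoin (invRing (ρ.comp H.subtype)) s) (lowDegAdjoin_fg _ s) <|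
    Algebra.adjoin_le <| Set.iUnion₂_subset fun i hi f hf => ?_
  obtain ⟨hinv, hhom⟩ := Submodule.mem_inf.mp hf
  refine isIntegral_lowDegAdjoin_invRing ρ H hhom (fun k hk => mem_invRing.mp hinv ⟨k, hk⟩) ?_
  rw [mul_comm]
  exact Nat.mul_le_mul_left _ hi

end Invariants

theorem sigmaAlg_subgroup_le_and_le_index_mul_general {F : Type*} [Field F] {G : Type*} [Group G]
    [Finite G] (H : Subgroup G)
    {ι : Type*} [Fintype ι] [DecidableEq ι] (ρ : Representation F G (ι → F)) :
    sigmaAlg (invRing (ρ.comp H.subtype)) ≤ sigmaAlg (invRing ρ) ∧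
      sigmaAlg (invRing ρ) ≤ H.index * sigmaAlg (invRing (ρ.comp H.subtype)) := by
  have hGH := invRing_le_invRing_comp_subtype ρ H
  have hG₀ := module_finite_lowDegAdjoin_card ρ
  have hH₀ : Module.Finite (lowDegAdjoin (invRing (ρ.comp H.subtype)) (Nat.card G)) _ :=
    Subalgebra.module_finite_of_le (lowDegAdjoin_mono hGH le_rfl)
  have hGσ := (sigmaAlg_le_iff hG₀).mp le_rfl
  have hHσ := (sigmaAlg_le_iff hH₀).mp le_rfl
  constructor
  · exact (sigmaAlg_le_iff hH₀).mpr
      (Subalgebra.module_finite_of_le (lowDegAdjoin_mono hGH le_rfl))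
  · exact (sigmaAlg_le_iff hG₀).mpr (module_finite_lowDegAdjoin_index_mul ρ H)

/-- For a subgroup `H` of the finite group `G` and a `G`-module `V`,
`σ(H,V) ≤ σ(G,V) ≤ [G:H] ⬝ σ(H,V)`. -/
theorem sigmaAlg_subgroup_le_and_le_index_mul {F : Type*} [Field F] {G : Type*} [Group G]
    [Finite G] (hG : (Nat.card G : F) ≠ 0) (H : Subgroup G)
    {ι : Type*} [Fintype ι] [DecidableEq ι] (ρ : Representation F G (ι → F)) :
    sigmaAlg (invRing (ρ.comp H.subtype)) ≤ sigmaAlg (invRing ρ) ∧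
      sigmaAlg (invRing ρ) ≤ H.index * sigmaAlg (invRing (ρ.comp H.subtype)) :=
  sigmaAlg_subgroup_le_and_le_index_mul_general H ρ
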